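/- For an Eulerian flow j on a finite graph, if the stochasticity S_x := j_x^2 − ∑_y j_{x,y}^2 vanishes at every vertex x, then the associated stochastic matrix q (with q^x_y = j_{x,y}/j_x for j_x>0, identity rows otherwise) is a permutation matrix of X. -/

import Mathlib

/-!
A vanishing stochasticity `j_x² = ∑_y j_{x,y}²` kills every cross term `j_{x,y} j_{x,z}`, so each
row of `j` with positive out-flow has a single nonzero entry, carrying the whole out-flow; the
corresponding row of `q` is a unit vector. A vertex with out-flow also has in-flow, so every
column of `q` has a nonzero entry, and the map sending each row to the position of its `1` is
surjective, hence a permutation of the finite vertex set.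
-/

open Finset

theorem Finset.mul_eq_zero_of_sq_sum_eq_sum_sq {ι : Type*} [DecidableEq ι] {s : Finset ι} {f : ι → ℕ}
    (h : (∑ i ∈ s, f i) ^ 2 = ∑ i ∈ s, f i ^ 2) {a b : ι} (ha : a ∈ s) (hb : b ∈ s)
    (hab : a ≠ b) : f a * f b = 0 := by
  have expand : (∑ i ∈ s, f i) ^ 2
      = ∑ i ∈ s, f i ^ 2 + ∑ i ∈ s, ∑ k ∈ s.erase i, f i * f k := by
    rw [sq, sum_mul_sum, ← sum_add_distrib]
    refine sum_congr rfl fun i hi => ?_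
    rw [sq, ← add_sum_erase s _ hi]
  have cross : ∑ i ∈ s, ∑ k ∈ s.erase i, f i * f k = 0 := by omega
  exact sum_eq_zero_iff.mp (sum_eq_zero_iff.mp cross a ha) b (mem_erase.mpr ⟨hab.symm, hb⟩)

theorem exists_eq_ite_of_sq_sum_eq_sum_sq {ι : Type*} [Fintype ι] [DecidableEq ι] {f : ι → ℕ}
    (h : (∑ i, f i) ^ 2 = ∑ i, f i ^ 2) (hpos : 0 < ∑ i, f i) :
    ∃ y, ∀ z, f z = if y = z then ∑ i, f i else 0 := by
  obtain ⟨y, -, hy⟩ := exists_ne_zero_of_sum_ne_zero hpos.ne'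
  have hzero : ∀ z, z ≠ y → f z = 0 := fun z hz =>
    (mul_eq_zero.mp (mul_eq_zero_of_sq_sum_eq_sum_sq h (mem_univ z) (mem_univ y) hz)).resolve_right hy
  refine ⟨y, fun z => ?_⟩
  split_ifs with hyz
  · subst hyz
    exact (sum_eq_single_of_mem y (mem_univ y) fun z _ hz => hzero z hz).symm
  · exact hzero z (Ne.symm hyz)

theorem Matrix.exists_perm_eq_ite_of_exists_ne_zero {X R : Type*} [Finite X] [DecidableEq X]
    [Zero R] [One R] (q : Matrix X X R) (hrow : ∀ x, ∃ y, ∀ z, q x z = if y = z then 1 else 0)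
    (hcol : ∀ y, ∃ x, q x y ≠ 0) : ∃ σ : Equiv.Perm X, ∀ x y, q x y = if σ x = y then 1 else 0 := by
  choose g hg using hrow
  have hsurj : Function.Surjective g := fun y => by
    obtain ⟨x, hx⟩ := hcol y
    exact ⟨x, by_contra fun hxy => hx (by rw [hg, if_neg hxy])⟩
  exact ⟨Equiv.ofBijective g ⟨Finite.injective_iff_surjective.mpr hsurj, hsurj⟩, hg⟩

section FlowTransitionMatrix

variable {X : Type*} [Fintype X] [DecidableEq X]

noncomputable def flowTransitionMatrix (j : X → X → ℕ) : Matrix X X ℝ := fun x y =>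
  if 0 < ∑ z, j x z then (j x y : ℝ) / ((∑ z, j x z : ℕ) : ℝ) else if x = y then 1 else 0

theorem flowTransitionMatrix_row_eq_ite {j : X → X → ℕ} {x : X}
    (hS : (∑ y, j x y) ^ 2 = ∑ y, (j x y) ^ 2) :
    ∃ y, ∀ z, flowTransitionMatrix j x z = if y = z then 1 else 0 := by
  unfold flowTransitionMatrix
  by_cases hx : 0 < ∑ z, j x z
  · obtain ⟨y, hy⟩ := exists_eq_ite_of_sq_sum_eq_sum_sq hS hx
    have hx' : ((∑ z, j x z : ℕ) : ℝ) ≠ 0 := by exact_mod_cast hx.ne'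
    refine ⟨y, fun z => ?_⟩
    rw [if_pos hx, hy z]
    split_ifs
    · exact div_self hx'
    · simp
  · exact ⟨x, fun z => by rw [if_neg hx]⟩

theorem flowTransitionMatrix_exists_ne_zero {j : X → X → ℕ} {y : X}
    (heul : ∑ z, j y z = ∑ z, j z y) : ∃ x, flowTransitionMatrix j x y ≠ 0 := by
  unfold flowTransitionMatrix
  by_cases hy : 0 < ∑ z, j y z
  · obtain ⟨x, -, hxy⟩ := exists_ne_zero_of_sum_ne_zero (heul ▸ hy.ne')
    have hx : 0 < ∑ z, j x z :=
      (Nat.pos_of_ne_zero hxy).trans_le (single_le_sum (fun _ _ => Nat.zero_le _) (mem_univ y))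
    refine ⟨x, ?_⟩
    rw [if_pos hx]
    exact div_ne_zero (by exact_mod_cast hxy) (by exact_mod_cast hx.ne')
  · exact ⟨y, by simp [hy]⟩

end FlowTransitionMatrix

theorem eulerian_flow_zero_stochasticity_permutation_general
    {X : Type*} [Fintype X] [DecidableEq X] (j : X → X → ℕ)
    (heul : ∀ x, ∑ y, j x y = ∑ y, j y x)
    (hS : ∀ x, (∑ y, j x y) ^ 2 = ∑ y, (j x y) ^ 2)
    (q : Matrix X X ℝ)
    (hq : ∀ x y, q x y =
      if 0 < ∑ z, j x z then (j x y : ℝ) / ((∑ z, j x z : ℕ) : ℝ)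
      else if x = y then 1 else 0) :
    ∃ σ : Equiv.Perm X, ∀ x y, q x y = if σ x = y then 1 else 0 := by
  obtain rfl : q = flowTransitionMatrix j := Matrix.ext hq
  exact Matrix.exists_perm_eq_ite_of_exists_ne_zero _
    (fun x => flowTransitionMatrix_row_eq_ite (hS x))
    (fun y => flowTransitionMatrix_exists_ne_zero (heul y))

/-- For an Eulerian flow `j` on a finite graph whose stochasticity
`S_x = j_x^2 − ∑_y j_{x,y}^2` vanishes at every vertex, the associated stochastic
matrix `q` is a permutation matrix. -/
theorem eulerian_flow_zero_stochasticity_permutation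
    {X : Type*} [Fintype X] [DecidableEq X] (j : X → X → ℕ)
    (heul : ∀ x, ∑ y, j x y = ∑ y, j y x)
    (hflow : ∀ x y, j x y * j y x = 0)
    (hS : ∀ x, (∑ y, j x y) ^ 2 = ∑ y, (j x y) ^ 2)
    (q : Matrix X X ℝ)
    (hq : ∀ x y, q x y =
      if 0 < ∑ z, j x z then (j x y : ℝ) / ((∑ z, j x z : ℕ) : ℝ)
      else if x = y then 1 else 0) :
    ∃ σ : Equiv.Perm X, ∀ x y, q x y = if σ x = y then 1 else 0 :=
  eulerian_flow_zero_stochasticity_permutation_general j heul hS q hq
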